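/- arXiv:1911.12472 — 5 statements merged into one kernel-verified Lean document; each statement's English description precedes it below -/
import Mathlib

section
/- Suppose that for every issue k, c1 disagrees with the voter v on issue k and some other candidate agrees with v on issue k. Then for every nonempty subset S of issues, there exists a candidate c_j (j ≠ 1) whose Hamming distance to v restricted to S is strictly less than that of c1; hence c1 cannot win the single-voter election even with best-case tie-breaking. (Caveat: this requires that some candidate agreeing with v on an issue of S exists, which follows from the hypothesis applied to any k ∈ S.) -/
/-- Hamming distance restricted to a set of issues. -/
def hamOn {ℓ : ℕ} (S : Finset (Fin ℓ)) (x y : Fin ℓ → Bool) : ℕ :=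
  (S.filter (fun k => x k ≠ y k)).card

section

open Finset

variable {ℓ : ℕ} {S : Finset (Fin ℓ)} {x y : Fin ℓ → Bool}

theorem hamOn_eq_card_iff : hamOn S x y = #S ↔ ∀ k ∈ S, x k ≠ y k :=
  card_filter_eq_iff

theorem hamOn_lt_card_of_mem {k : Fin ℓ} (hk : k ∈ S) (hxy : x k = y k) : hamOn S x y < #S :=
  card_lt_card (filter_ssubset.2 ⟨k, hk, fun hne => hne hxy⟩)

end

/-- if on every issue c1 disagrees with v while some other
candidate agrees with v, then on every nonempty issue set some other
candidate is strictly closer to v than c1 (completeness of Single Issue Win). -/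
theorem single_issue_win_complete
    (ℓ m : ℕ) (c1 : Fin ℓ → Bool) (c : Fin m → Fin ℓ → Bool) (v : Fin ℓ → Bool)
    (h : ∀ k : Fin ℓ, c1 k ≠ v k ∧ ∃ j : Fin m, c j k = v k) :
    ∀ S : Finset (Fin ℓ), S.Nonempty →
      ∃ j : Fin m, hamOn S v (c j) < hamOn S v c1 := by
  rintro S ⟨k, hk⟩
  obtain ⟨j, hj⟩ := (h k).2
  have hc1 : hamOn S v c1 = S.card := hamOn_eq_card_iff.2 fun i _ => (h i).1.symm
  exact ⟨j, hc1 ▸ hamOn_lt_card_of_mem hk hj.symm⟩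
end

section
/- The Best-Single-Issue algorithm is a 1/2-approximation for two-candidate binary Max Support with best-case tie-breaking: let OPT be the maximum over all nonempty issue sets S of the number of voters voting for c1 on S, and let h* be the maximum over single issues k of the number of voters voting for c1 on {k}. Then 2·h* ≥ OPT. -/
/-- Number of voters voting for c1 over c2 on issue set S (best-case
tie-breaking). -/
def votes {ℓ n : ℕ} (c1 c2 : Fin ℓ → Bool) (v : Fin n → Fin ℓ → Bool)
    (S : Finset (Fin ℓ)) : ℕ :=
  (Finset.univ.filter (fun j : Fin n => hamOn S (v j) c1 ≤ hamOn S (v j) c2)).card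

/-!
If `S` contains an issue on which `c1` and `c2` agree, every voter supports `c1` on that issue
alone. Otherwise `c1` and `c2` disagree everywhere on `S`, so a supporter of `c1` on `S` disagrees
with `c2` on at least half of `S`. Double counting the pairs (supporter, issue of `S` on which the
supporter disagrees with `c2`) gives `|S| · votes S ≤ 2 · ∑_{k ∈ S} votes {k}`, and some term of
the sum is at least the average.
-/

open Finset

section

variable {ℓ n : ℕ}

theorem hamOn_singleton (k : Fin ℓ) (x y : Fin ℓ → Bool) :
    hamOn {k} x y = if x k ≠ y k then 1 else 0 := by
  unfold hamOn
  split_ifs <;> simp [filter_singleton, *]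

theorem hamOn_add_hamOn_of_forall_ne {S : Finset (Fin ℓ)} {y z : Fin ℓ → Bool}
    (hyz : ∀ k ∈ S, y k ≠ z k) (x : Fin ℓ → Bool) :
    hamOn S x y + hamOn S x z = #S := by
  have hz : hamOn S x z = #{k ∈ S | ¬ x k ≠ y k} := by
    unfold hamOn
    congr 1
    refine filter_congr fun k hk => ?_
    have hne := hyz k hk
    revert hne
    cases x k <;> cases y k <;> cases z k <;> decide
  rw [hz, hamOn, card_filter_add_card_filter_not]

theorem votes_le (c1 c2 : Fin ℓ → Bool) (v : Fin n → Fin ℓ → Bool) (S : Finset (Fin ℓ)) :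
    votes c1 c2 v S ≤ n :=
  (card_filter_le _ _).trans_eq (card_fin n)

theorem votes_singleton_of_eq {c1 c2 : Fin ℓ → Bool} (v : Fin n → Fin ℓ → Bool) {k : Fin ℓ}
    (hk : c1 k = c2 k) : votes c1 c2 v {k} = n := by
  simp [votes, hamOn_singleton, hk]

theorem card_filter_ne_le_votes_singleton (c1 c2 : Fin ℓ → Bool) (v : Fin n → Fin ℓ → Bool)
    (k : Fin ℓ) : #{j | v j k ≠ c2 k} ≤ votes c1 c2 v {k} := by
  refine card_le_card fun j hj => ?_
  simp only [mem_filter, mem_univ, true_and] at hj ⊢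
  rw [hamOn_singleton, hamOn_singleton, if_pos hj]
  split_ifs <;> simp

theorem card_mul_votes_le {c1 c2 : Fin ℓ → Bool} (v : Fin n → Fin ℓ → Bool)
    {S : Finset (Fin ℓ)} (hS : ∀ k ∈ S, c1 k ≠ c2 k) :
    #S * votes c1 c2 v S ≤ 2 * ∑ k ∈ S, votes c1 c2 v {k} := by
  have hsupport : ∀ j ∈ ({j | hamOn S (v j) c1 ≤ hamOn S (v j) c2} : Finset (Fin n)),
      #S ≤ 2 * hamOn S (v j) c2 := by
    intro j hj
    have hsplit := hamOn_add_hamOn_of_forall_ne hS (v j)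
    have hcloser := (mem_filter.mp hj).2
    omega
  have hdouble : ∑ j, hamOn S (v j) c2 = ∑ k ∈ S, #{j | v j k ≠ c2 k} :=
    sum_card_bipartiteAbove_eq_sum_card_bipartiteBelow (r := fun j k => v j k ≠ c2 k)
  calc #S * votes c1 c2 v S
      = ∑ j ∈ ({j | hamOn S (v j) c1 ≤ hamOn S (v j) c2} : Finset (Fin n)), #S := by
        rw [sum_const, smul_eq_mul, mul_comm, votes]
    _ ≤ ∑ j, 2 * hamOn S (v j) c2 :=
        (sum_le_sum hsupport).trans (sum_le_sum_of_subset (subset_univ _))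
    _ ≤ 2 * ∑ k ∈ S, votes c1 c2 v {k} := by
        rw [← mul_sum, hdouble]
        exact Nat.mul_le_mul_left 2
          (sum_le_sum fun k _ => card_filter_ne_le_votes_singleton c1 c2 v k)

end

/-- Best-Single-Issue is a 1/2-approximation for
two-candidate binary Max Support with best-case tie-breaking: for every
nonempty issue set S there is a single issue k whose vote count is at
least half of the vote count of S; hence 2·h* ≥ OPT. -/
theorem best_single_issue_half_approx
    (ℓ n : ℕ) (c1 c2 : Fin ℓ → Bool) (v : Fin n → Fin ℓ → Bool) :
    ∀ S : Finset (Fin ℓ), S.Nonempty →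
      ∃ k : Fin ℓ, votes c1 c2 v S ≤ 2 * votes c1 c2 v {k} := by
  intro S hS
  by_cases hagree : ∃ k ∈ S, c1 k = c2 k
  · obtain ⟨k, -, hk⟩ := hagree
    refine ⟨k, ?_⟩
    rw [votes_singleton_of_eq v hk]
    linarith [votes_le c1 c2 v S]
  · push Not at hagree
    have hsum : ∑ _k ∈ S, votes c1 c2 v S ≤ ∑ k ∈ S, 2 * votes c1 c2 v {k} := by
      rw [sum_const, smul_eq_mul, ← mul_sum]
      exact card_mul_votes_le v hagree
    obtain ⟨k, -, hk⟩ := exists_le_of_sum_le hS hsum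
    exact ⟨k, hk⟩
end

section
/- Worst-case counting refinement: suppose c1 has position 1 on all issues, c2 has position 0 on all issues, and for every issue at most h voters have position 1 on it. Then for any nonempty set S of k issues, the number of voters who have position 1 on strictly more than k/2 issues of S (i.e., on at least ⌊k/2⌋+1 issues) is at most 2h. Hence Best-Single-Issue is a 1/2-approximation for two-candidate binary Max Support under worst-case tie-breaking. -/
/-! Double count the incidences between the majority voters `M` and the `k` issues of `t`: every
issue is held by at most `h` voters, and every voter of `M` holds at least `⌊k/2⌋ + 1` of these
issues, so `#M * (⌊k/2⌋ + 1) ≤ k * h ≤ 2 * h * (⌊k/2⌋ + 1)`. -/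

open Finset

theorem Finset.card_filter_lt_two_mul_card_filter_le {α β : Type*} (r : α → β → Prop)
    [∀ a b, Decidable (r a b)] (s : Finset α) (t : Finset β) {h : ℕ}
    (hh : ∀ b ∈ t, #{a ∈ s | r a b} ≤ h) :
    #{a ∈ s | #t < 2 * #{b ∈ t | r a b}} ≤ 2 * h := by
  set M := {a ∈ s | #t < 2 * #{b ∈ t | r a b}}
  have hincidences : #M * (#t / 2 + 1) ≤ #t * h :=
    card_mul_le_card_mul r
      (fun a ha => by have := (mem_filter.mp ha).2; unfold bipartiteAbove; omega)
      (fun b hb => (card_le_card (monotone_filter_left _ (filter_subset _ s))).trans (hh b hb))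
  have hscaled : #M * (#t / 2 + 1) ≤ 2 * h * (#t / 2 + 1) :=
    calc #M * (#t / 2 + 1) ≤ #t * h := hincidences
      _ ≤ (2 * (#t / 2 + 1)) * h := Nat.mul_le_mul_right h (by omega)
      _ = 2 * h * (#t / 2 + 1) := by ring
  exact Nat.le_of_mul_le_mul_right hscaled (Nat.succ_pos _)

/-- worst-case counting refinement. If on every issue at most
h voters hold position 1, then for any nonempty issue set S, the number of
voters who hold position 1 on strictly more than half the issues of S is at
most 2h. -/
theorem binary_max_support_counting_strict
    (ℓ n h : ℕ) (v : Fin n → Fin ℓ → Bool)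
    (hh : ∀ k : Fin ℓ, (Finset.univ.filter (fun j : Fin n => v j k = true)).card ≤ h) :
    ∀ S : Finset (Fin ℓ), S.Nonempty →
      (Finset.univ.filter (fun j : Fin n =>
          S.card < 2 * (S.filter (fun k => v j k = true)).card)).card ≤ 2 * h :=
  fun S _ => card_filter_lt_two_mul_card_filter_le (fun j k => v j k = true) univ S fun k _ => hh k
end

section
/- In the MIS-to-TCMS reduction matrix: let G = (V, E) be a graph with |V| = n ≥ 2, and define the n×n matrix M by M_{u,u} = n−1, M_{u,v} = −n if {u,v} ∈ E, and M_{u,v} = −1 if u ≠ v and {u,v} ∉ E. Then for any nonempty column set S ⊆ V, row j satisfies Σ_{k∈S} M_{j,k} ≥ 0 if and only if j ∈ S and no neighbor of j is in S. Consequently, the maximum over nonempty S of the number of rows j with Σ_{k∈S} M_{j,k} ≥ 0 equals the maximum size of an independent set in G. -/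
/-- the MIS-to-TCMS reduction matrix. For the matrix M with
diagonal n−1, −n on edges and −1 on non-adjacent off-diagonal pairs:
(a) for nonempty S, row j has nonnegative sum over columns S iff j ∈ S and
no neighbor of j lies in S; (b) the maximum over nonempty column sets S of
the number of nonnegative rows equals the maximum size of an independent
set in G. -/
theorem mis_reduction_matrix_correct
    (n : ℕ) (hn : 2 ≤ n) (G : SimpleGraph (Fin n)) [DecidableRel G.Adj]
    (M : Fin n → Fin n → ℤ)
    (hM : ∀ u w : Fin n, M u w =
      if u = w then (n : ℤ) - 1 else if G.Adj u w then -(n : ℤ) else -1) :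
    (∀ S : Finset (Fin n), S.Nonempty → ∀ j : Fin n,
        (0 ≤ ∑ k ∈ S, M j k ↔ j ∈ S ∧ ∀ u ∈ S, ¬ G.Adj j u)) ∧
    ((Finset.univ.powerset.filter (fun S : Finset (Fin n) => S.Nonempty)).sup
        (fun S => (Finset.univ.filter (fun j : Fin n => 0 ≤ ∑ k ∈ S, M j k)).card)
      = (Finset.univ.powerset.filter (fun I : Finset (Fin n) =>
            ∀ u ∈ I, ∀ w ∈ I, ¬ G.Adj u w)).sup Finset.card) := by
  have key : ∀ S : Finset (Fin n), S.Nonempty → ∀ j : Fin n,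
      (0 ≤ ∑ k ∈ S, M j k ↔ j ∈ S ∧ ∀ u ∈ S, ¬ G.Adj j u) := by
    intro S hS j
    constructor
    · intro h
      by_contra hcon
      rw [not_and_or] at hcon
      by_cases hj : j ∈ S
      · have hcon' : ¬ ∀ u ∈ S, ¬ G.Adj j u := by tauto
        push_neg at hcon'
        obtain ⟨u, hu, hadj⟩ := hcon'
        have hune : j ≠ u := fun e => (G.irrefl (e ▸ hadj))
        have hu' : u ∈ S.erase j := Finset.mem_erase.mpr ⟨fun e => hune e.symm, hu⟩
        have h1 : ∑ k ∈ S, M j k = M j j + ∑ k ∈ S.erase j, M j k :=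
          (Finset.add_sum_erase S _ hj).symm
        have h2 : ∑ k ∈ S.erase j, M j k = M j u + ∑ k ∈ (S.erase j).erase u, M j k :=
          (Finset.add_sum_erase _ _ hu').symm
        have h3 : ∑ k ∈ (S.erase j).erase u, M j k ≤ 0 := by
          apply Finset.sum_nonpos
          intro k hk
          have hkj : k ≠ j := (Finset.mem_erase.mp (Finset.mem_of_mem_erase hk)).1
          rw [hM]
          rw [if_neg (fun e : j = k => hkj e.symm)]
          split
          · have : (0:ℤ) ≤ n := Int.natCast_nonneg n
            linarith
          · norm_num
        rw [hM j j, if_pos rfl] at h1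
        rw [hM j u, if_neg hune, if_pos hadj] at h2
        rw [h1, h2] at h
        linarith
      · have h4 : ∑ k ∈ S, M j k ≤ S.card • (-1 : ℤ) := by
          apply Finset.sum_le_card_nsmul
          intro k hk
          have hkj : j ≠ k := fun e => hj (e ▸ hk)
          rw [hM, if_neg hkj]
          split
          · have : (0:ℤ) ≤ n := Int.natCast_nonneg n
            linarith
          · norm_num
        have hc : 1 ≤ S.card := Finset.card_pos.mpr hS
        have : S.card • (-1 : ℤ) = -(S.card : ℤ) := by simp
        rw [this] at h4
        have : (1:ℤ) ≤ S.card := by exact_mod_cast hc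
        linarith
    · rintro ⟨hj, hind⟩
      have h1 : ∑ k ∈ S, M j k = M j j + ∑ k ∈ S.erase j, M j k :=
        (Finset.add_sum_erase S _ hj).symm
      have h2 : ∑ k ∈ S.erase j, M j k = ∑ k ∈ S.erase j, (-1 : ℤ) := by
        apply Finset.sum_congr rfl
        intro k hk
        obtain ⟨hkj, hkS⟩ := Finset.mem_erase.mp hk
        rw [hM, if_neg (fun e : j = k => hkj e.symm), if_neg (hind k hkS)]
      rw [h1, h2, Finset.sum_const, hM j j, if_pos rfl,
        Finset.card_erase_of_mem hj]
      have hcle : S.card ≤ n := by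
        simpa using Finset.card_le_univ S
      have hc : 1 ≤ S.card := Finset.card_pos.mpr hS
      have : ((S.card - 1 : ℕ) : ℤ) = (S.card : ℤ) - 1 := by
        omega
      simp only [nsmul_eq_mul, mul_neg, mul_one]
      rw [this]
      have : (S.card : ℤ) ≤ n := by exact_mod_cast hcle
      linarith
  refine ⟨key, ?_⟩
  apply le_antisymm
  · apply Finset.sup_le
    intro S hSmem
    rw [Finset.mem_filter] at hSmem
    obtain ⟨-, hS⟩ := hSmem
    set T := Finset.univ.filter (fun j : Fin n => 0 ≤ ∑ k ∈ S, M j k) with hT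
    have hTmem : T ∈ Finset.univ.powerset.filter (fun I : Finset (Fin n) =>
        ∀ u ∈ I, ∀ w ∈ I, ¬ G.Adj u w) := by
      rw [Finset.mem_filter]
      refine ⟨Finset.mem_powerset.mpr (Finset.subset_univ _), ?_⟩
      intro u hu w hw hadj
      rw [hT, Finset.mem_filter] at hu hw
      have hu' := (key S hS u).mp hu.2
      have hw' := (key S hS w).mp hw.2
      exact hu'.2 w hw'.1 hadj
    exact Finset.le_sup (f := Finset.card) hTmem
  · apply Finset.sup_le
    intro I hImem
    rw [Finset.mem_filter] at hImem
    obtain ⟨-, hind⟩ := hImem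
    rcases Finset.eq_empty_or_nonempty I with rfl | hI
    · simp
    · have hIf : I ∈ Finset.univ.powerset.filter (fun S : Finset (Fin n) => S.Nonempty) := by
        rw [Finset.mem_filter]
        exact ⟨Finset.mem_powerset.mpr (Finset.subset_univ _), hI⟩
      have hsub : I ⊆ Finset.univ.filter (fun j : Fin n => 0 ≤ ∑ k ∈ I, M j k) := by
        intro j hj
        rw [Finset.mem_filter]
        exact ⟨Finset.mem_univ _, (key I hI j).mpr ⟨hj, fun u hu => hind j hj u hu⟩⟩
      calc I.card ≤ (Finset.univ.filter (fun j : Fin n => 0 ≤ ∑ k ∈ I, M j k)).card :=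
            Finset.card_le_card hsub
        _ ≤ _ := Finset.le_sup (f := fun S => (Finset.univ.filter
            (fun j : Fin n => 0 ≤ ∑ k ∈ S, M j k)).card) hIf
end

section
/- 0-1 ILP forcing gadget: let A ∈ ℤ^{m×ℓ} and b ∈ ℤ^m, and define the (m+1)×(ℓ+1) matrix M by M_{i,k} = A_{i,k} for i ≤ m, k ≤ ℓ; M_{i,ℓ+1} = −b_i for i ≤ m; M_{m+1,k} = −1/(ℓ+1) for k ≤ ℓ; and M_{m+1,ℓ+1} = 1. Then there exists x ∈ {0,1}^ℓ with Ax ≥ b (componentwise) if and only if there exists a nonempty subset S ⊆ {1,...,ℓ+1} such that Σ_{k∈S} M_{i,k} ≥ 0 for every row i ∈ {1,...,m+1}. -/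
/-!
A feasible column set must contain the last column: every other entry of the last row is
negative, so a nonempty set avoiding it has a negative sum there. Once the last column is in,
that row sum is `1 - (|S| - 1) / (ℓ + 1) > 0`, and the other rows read `A x - b ≥ 0` for the
indicator vector `x` of the remaining columns. So feasible column sets correspond exactly to
feasible 0-1 vectors `x`, via `x ↦ {j | Fin.snoc x true j}`.
-/

open Finset

namespace Fin

def snocTrueSet {n : ℕ} (x : Fin n → Bool) : Finset (Fin (n + 1)) :=
  {j | (snoc x true : Fin (n + 1) → Bool) j}

theorem last_mem_snocTrueSet {n : ℕ} (x : Fin n → Bool) : last n ∈ snocTrueSet x := by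
  simp [snocTrueSet]

theorem sum_snocTrueSet {n : ℕ} {R : Type*} [AddCommMonoid R] (x : Fin n → Bool)
    (f : Fin (n + 1) → R) :
    ∑ j ∈ snocTrueSet x, f j = f (last n) + ∑ k, if x k then f k.castSucc else 0 := by
  rw [snocTrueSet, sum_filter, sum_univ_castSucc, add_comm]
  simp only [snoc_castSucc, snoc_last, if_true]

theorem snocTrueSet_decide_mem_castSucc {n : ℕ} {S : Finset (Fin (n + 1))} (hS : last n ∈ S) :
    snocTrueSet (fun k => decide (k.castSucc ∈ S)) = S := by
  ext j
  induction j using lastCases <;> simp [snocTrueSet, hS]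

theorem last_mem_of_sum_nonneg {n : ℕ} {R : Type*} [AddCommMonoid R] [PartialOrder R]
    [IsOrderedCancelAddMonoid R] {f : Fin (n + 1) → R} (hf : ∀ k : Fin n, f k.castSucc < 0)
    {S : Finset (Fin (n + 1))} (hne : S.Nonempty) (hS : 0 ≤ ∑ j ∈ S, f j) : last n ∈ S := by
  by_contra hlast
  refine (sum_neg (fun j hj => ?_) hne).not_ge hS
  rw [← castSucc_castPred j (ne_of_mem_of_not_mem hj hlast)]
  exact hf _

end Fin

theorem sum_ite_neg_inv_succ_gt_neg_one {n : ℕ} (p : Fin n → Bool) :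
    -1 < ∑ k, if p k then -(1 / ((n : ℚ) + 1)) else 0 := by
  have hle : ∑ _k : Fin n, -(1 / ((n : ℚ) + 1)) ≤ ∑ k, if p k then -(1 / ((n : ℚ) + 1)) else 0 :=
    sum_le_sum fun k _ => by split_ifs <;> simp; positivity
  have hlt : -1 < ∑ _k : Fin n, -(1 / ((n : ℚ) + 1)) := by
    rw [sum_const, card_univ, Fintype.card_fin, nsmul_eq_mul, mul_neg, mul_one_div, neg_lt_neg_iff,
      div_lt_one (Nat.cast_add_one_pos n)]
    exact lt_add_one _
  exact hlt.trans_le hle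

/-- 0-1 ILP forcing gadget. With M built from A, b, a row of
−1/(ℓ+1)'s and a forcing entry 1, there is x ∈ {0,1}^ℓ with Ax ≥ b iff
there is a nonempty column set S of M all of whose row sums are
nonnegative. -/
theorem ilp_forcing_gadget_correct
    (m ℓ : ℕ) (A : Fin m → Fin ℓ → ℤ) (b : Fin m → ℤ)
    (M : Fin (m + 1) → Fin (ℓ + 1) → ℚ)
    (hA : ∀ (i : Fin m) (k : Fin ℓ), M i.castSucc k.castSucc = (A i k : ℚ))
    (hb : ∀ i : Fin m, M i.castSucc (Fin.last ℓ) = -(b i : ℚ))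
    (hrow : ∀ k : Fin ℓ, M (Fin.last m) k.castSucc = -(1 / ((ℓ : ℚ) + 1)))
    (hone : M (Fin.last m) (Fin.last ℓ) = 1) :
    (∃ x : Fin ℓ → Bool,
        ∀ i : Fin m, b i ≤ ∑ k : Fin ℓ, A i k * (if x k then 1 else 0))
      ↔ (∃ S : Finset (Fin (ℓ + 1)), S.Nonempty ∧
          ∀ i : Fin (m + 1), 0 ≤ ∑ k ∈ S, M i k) := by
  have key : ∀ x : Fin ℓ → Bool, (∀ i : Fin (m + 1), 0 ≤ ∑ k ∈ Fin.snocTrueSet x, M i k) ↔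
      ∀ i : Fin m, b i ≤ ∑ k : Fin ℓ, A i k * (if x k then 1 else 0) := by
    intro x
    have hlastRow : 0 ≤ ∑ k ∈ Fin.snocTrueSet x, M (Fin.last m) k := by
      rw [Fin.sum_snocTrueSet, hone]
      simp only [hrow]
      linarith [sum_ite_neg_inv_succ_gt_neg_one x]
    rw [Fin.forall_fin_succ', and_iff_left hlastRow]
    refine forall_congr' fun i => ?_
    rw [Fin.sum_snocTrueSet, hb, ← sub_eq_neg_add, sub_nonneg, ← Int.cast_le (R := ℚ)]
    simp [hA, mul_ite]
  constructor
  · rintro ⟨x, hx⟩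
    exact ⟨_, ⟨_, Fin.last_mem_snocTrueSet x⟩, (key x).2 hx⟩
  · rintro ⟨S, hne, hS⟩
    have hlast : Fin.last ℓ ∈ S :=
      Fin.last_mem_of_sum_nonneg (fun k => by rw [hrow]; simp; positivity) hne (hS (Fin.last m))
    rw [← Fin.snocTrueSet_decide_mem_castSucc hlast] at hS
    exact ⟨_, (key _).1 hS⟩
end
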